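/- Let p be prime, A a symmetric (n+k)×(n+k) matrix over F_p with rows/columns indexed by X ∪ Y (|X| = k, |Y| = n) and with zero diagonal blocks A_{XX} = 0. Define f : (C^p)^{⊗k} → (C^p)^{⊗n} on basis states by f(|d^X⟩) = p^{-n/2} Σ_{d^Y ∈ F_p^n} e^{(2πi/p)·q(d^X,d^Y)} |d^Y⟩, where q(d^X,d^Y) = (d^X)^t A_{XY} d^Y + ½ (d^Y)^t A_{YY} d^Y (the quadratic form of A restricted to zero-diagonal symmetric matrices, well defined over F_p for p odd). If the matrix A_{XY} ∈ F_p^{k×n} has rank k, then f is an isometry (in particular injective), so its image is a p^k-dimensional subspace of (C^p)^{⊗n}. -/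

import Mathlib

/-!
The encoder sends `|d^X⟩` to the normalized state with phases `χ(q(d^X, ·))`, so it is the linear
map `v ↦ ∑ v(d^X) e(d^X)` and it suffices to show that the states `e(d^X)` are orthonormal. In
`⟪e(d^X), e(d^X')⟫` the quadratic term in `d^Y` cancels, leaving the character sum
`p^{-n} ∑_{d^Y} χ((d^X' - d^X) A_{XY} · d^Y)`, which is `1` or `0` according as
`(d^X' - d^X) A_{XY}` vanishes; since `A_{XY}` has rank `k`, this happens only for `d^X = d^X'`.
-/

open Finset Matrix

theorem Matrix.vecMul_injective_iff_rank_eq_card {K m n : Type*} [Field K] [Fintype m]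
    [Fintype n] {A : Matrix m n K} : Function.Injective A.vecMul ↔ A.rank = Fintype.card m := by
  rw [vecMul_injective_iff, linearIndependent_iff_card_eq_finrank_span, rank_eq_finrank_span_row,
    eq_comm, Set.finrank]

theorem Matrix.sum_sum_mul_mul_eq_vecMul_dotProduct {R m n : Type*} [CommSemiring R] [Fintype m]
    [Fintype n] (x : m → R) (A : Matrix m n R) (y : n → R) :
    ∑ i, ∑ j, x i * A i j * y j = x ᵥ* A ⬝ᵥ y := by
  simp only [dotProduct, vecMul, Finset.sum_mul]
  exact Finset.sum_comm

theorem Real.rpow_neg_div_two_sq_mul_pow {x : ℝ} (hx : 0 < x) (m : ℕ) :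
    (x ^ (-(m : ℝ) / 2)) ^ 2 * x ^ m = 1 := by
  rw [← Real.rpow_mul_natCast hx.le, ← Real.rpow_natCast x m, ← Real.rpow_add hx]
  norm_num

theorem AddChar.map_sum_eq_prod {A M ι : Type*} [AddCommMonoid A] [CommMonoid M] (ψ : AddChar A M)
    (s : Finset ι) (f : ι → A) : ψ (∑ i ∈ s, f i) = ∏ i ∈ s, ψ (f i) :=
  map_sum ψ.toAddMonoidHom f s

namespace AddChar.IsPrimitive

variable {R ι : Type*} [CommRing R] [Fintype R] [Fintype ι] [DecidableEq ι]

theorem sum_apply_dotProduct [DecidableEq R] {R' : Type*} [CommRing R']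
    [IsDomain R'] {ψ : AddChar R R'} (hψ : ψ.IsPrimitive) (w : ι → R) :
    ∑ y : ι → R, ψ (w ⬝ᵥ y) = if w = 0 then (Fintype.card R : R') ^ Fintype.card ι else 0 := by
  calc ∑ y : ι → R, ψ (w ⬝ᵥ y) = ∏ i, ∑ a, ψ (a * w i) := by
        simp only [Fintype.prod_sum, dotProduct, ψ.map_sum_eq_prod, mul_comm]
    _ = ∏ i, if w i = 0 then (Fintype.card R : R') else 0 := by
        simp only [sum_mulShift _ hψ, Nat.cast_ite, Nat.cast_zero]
    _ = _ := by
        split_ifs with hw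
        · simp [hw]
        · obtain ⟨i, hi⟩ := Function.ne_iff.mp hw
          exact prod_eq_zero (mem_univ i) (if_neg hi)

open ComplexConjugate in
theorem orthonormal_of_injective_vecMul {κ : Type*} [Fintype κ] {ψ : AddChar R ℂ}
    (hψ : ψ.IsPrimitive) {A : Matrix κ ι R} (hA : Function.Injective A.vecMul)
    (r : (ι → R) → R) :
    Orthonormal ℂ fun x : κ → R => WithLp.toLp 2 fun y : ι → R =>
      (((Fintype.card R : ℝ) ^ (-(Fintype.card ι : ℝ) / 2) : ℝ) : ℂ) * ψ (x ᵥ* A ⬝ᵥ y + r y) := by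
  classical
  set c : ℝ := (Fintype.card R : ℝ) ^ (-(Fintype.card ι : ℝ) / 2)
  have hc : c ^ 2 * (Fintype.card R : ℝ) ^ Fintype.card ι = 1 :=
    Real.rpow_neg_div_two_sq_mul_pow (by positivity) _
  rw [orthonormal_iff_ite]
  intro x x'
  have hphase (y : ι → R) :
      conj (ψ (x ᵥ* A ⬝ᵥ y + r y)) * ψ (x' ᵥ* A ⬝ᵥ y + r y) = ψ ((x' - x) ᵥ* A ⬝ᵥ y) := by
    rw [← AddChar.map_neg_eq_conj, ← AddChar.map_add_eq_mul, sub_vecMul, sub_dotProduct]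
    ring_nf
  have hvanish : (x' - x) ᵥ* A = 0 ↔ x = x' := by
    rw [sub_vecMul, sub_eq_zero, hA.eq_iff, eq_comm]
  calc _ = ((c ^ 2 : ℝ) : ℂ) * ∑ y : ι → R, ψ ((x' - x) ᵥ* A ⬝ᵥ y) := by
        simp only [PiLp.inner_apply, RCLike.inner_apply, map_mul, Complex.conj_ofReal,
          Complex.ofReal_pow, ← hphase, mul_sum]
        exact sum_congr rfl fun _ _ => by ring
    _ = if x = x' then 1 else 0 := by
        simp only [hψ.sum_apply_dotProduct, hvanish]
        split_ifs
        · exact_mod_cast hc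
        · simp

end AddChar.IsPrimitive

section EuclideanLinearIsometry

variable {𝕜 E ι : Type*} [RCLike 𝕜] [NormedAddCommGroup E] [InnerProductSpace 𝕜 E] [Fintype ι]
  [DecidableEq ι] {e : ι → E}

theorem EuclideanSpace.linearCombination_ofLp_comp_basisFun :
    ⇑(Fintype.linearCombination 𝕜 e ∘ₗ (WithLp.linearEquiv 2 𝕜 (ι → 𝕜)).toLinearMap) ∘
      (EuclideanSpace.basisFun ι 𝕜).toBasis = e := by
  ext i
  simp [EuclideanSpace.basisFun_apply]

noncomputable def Orthonormal.euclideanLinearIsometry (he : Orthonormal 𝕜 e) :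
    EuclideanSpace 𝕜 ι →ₗᵢ[𝕜] E :=
  LinearMap.isometryOfOrthonormal
    (Fintype.linearCombination 𝕜 e ∘ₗ (WithLp.linearEquiv 2 𝕜 (ι → 𝕜)).toLinearMap)
    (v := (EuclideanSpace.basisFun ι 𝕜).toBasis)
    (by simp only [OrthonormalBasis.coe_toBasis, (EuclideanSpace.basisFun ι 𝕜).orthonormal])
    (by rw [EuclideanSpace.linearCombination_ofLp_comp_basisFun]; exact he)

theorem Orthonormal.euclideanLinearIsometry_apply (he : Orthonormal 𝕜 e) (v : EuclideanSpace 𝕜 ι) :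
    he.euclideanLinearIsometry v = ∑ i, v i • e i :=
  Fintype.linearCombination_apply 𝕜 e v.ofLp

end EuclideanLinearIsometry

theorem graph_code_isometry_general (p : ℕ) [Fact p.Prime] (k n : ℕ)
    (AXY : Matrix (Fin k) (Fin n) (ZMod p)) (AYY : Matrix (Fin n) (Fin n) (ZMod p))
    (hrank : AXY.rank = k)
    (q : (Fin k → ZMod p) → (Fin n → ZMod p) → ZMod p)
    (hq : ∀ dX dY, q dX dY = (∑ i, ∑ j, dX i * AXY i j * dY j) +
      (2 : ZMod p)⁻¹ * ∑ i, ∑ j, dY i * AYY i j * dY j)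
    (f : EuclideanSpace ℂ (Fin k → ZMod p) → EuclideanSpace ℂ (Fin n → ZMod p))
    (hf : ∀ v dY, f v dY = (((p : ℝ) ^ (-(n : ℝ) / 2) : ℝ) : ℂ) *
      ∑ dX : Fin k → ZMod p,
        Complex.exp (2 * Real.pi * Complex.I * ((q dX dY).val : ℕ) / p) * v dX) :
    (∀ v, ‖f v‖ = ‖v‖) ∧ Function.Injective f ∧
    Module.finrank ℂ (Submodule.span ℂ (Set.range f)) = p ^ k := by
  have hA : Function.Injective AXY.vecMul :=
    vecMul_injective_iff_rank_eq_card.mpr (by rw [hrank, Fintype.card_fin])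
  have he := (ZMod.isPrimitive_stdAddChar p).orthonormal_of_injective_vecMul hA
    fun dY => (2 : ZMod p)⁻¹ * ∑ i, ∑ j, dY i * AYY i j * dY j
  obtain rfl : f = he.euclideanLinearIsometry := by
    funext v
    ext dY
    rw [hf, he.euclideanLinearIsometry_apply]
    simp only [hq, sum_sum_mul_mul_eq_vecMul_dotProduct, ZMod.card, Fintype.card_fin,
      ZMod.stdAddChar_apply, ZMod.toCircle_apply, ZMod.natCast_val, WithLp.ofLp_sum,
      WithLp.ofLp_smul, Finset.sum_apply, Pi.smul_apply, smul_eq_mul, mul_sum]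
    exact sum_congr rfl fun _ _ => by ring
  refine ⟨LinearIsometry.norm_map _, LinearIsometry.injective _, ?_⟩
  rw [← LinearIsometry.coe_toLinearMap, ← LinearMap.coe_range, Submodule.span_eq,
    LinearMap.finrank_range_of_inj (LinearIsometry.injective _), finrank_euclideanSpace,
    Fintype.card_fun, ZMod.card, Fintype.card_fin]

/-- For `p` an odd prime and a symmetric interaction matrix with `A_{XX} = 0`, the
graph-code encoding map `f(|d^X⟩) = p^{-n/2} Σ_{d^Y} e^{(2πi/p) q(d^X,d^Y)} |d^Y⟩` is an
isometry (in particular injective) whenever the block `A_{XY}` has rank `k`; its image is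
a `p^k`-dimensional subspace of `(ℂ^p)^{⊗n}`. -/
theorem graph_code_isometry (p : ℕ) [Fact p.Prime] (hp : p ≠ 2) (k n : ℕ)
    (AXY : Matrix (Fin k) (Fin n) (ZMod p)) (AYY : Matrix (Fin n) (Fin n) (ZMod p))
    (hsymm : AYY.IsSymm) (hdiag : ∀ i, AYY i i = 0)
    (hrank : AXY.rank = k)
    (q : (Fin k → ZMod p) → (Fin n → ZMod p) → ZMod p)
    (hq : ∀ dX dY, q dX dY = (∑ i, ∑ j, dX i * AXY i j * dY j) +
      (2 : ZMod p)⁻¹ * ∑ i, ∑ j, dY i * AYY i j * dY j)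
    (f : EuclideanSpace ℂ (Fin k → ZMod p) → EuclideanSpace ℂ (Fin n → ZMod p))
    (hf : ∀ v dY, f v dY = (((p : ℝ) ^ (-(n : ℝ) / 2) : ℝ) : ℂ) *
      ∑ dX : Fin k → ZMod p,
        Complex.exp (2 * Real.pi * Complex.I * ((q dX dY).val : ℕ) / p) * v dX) :
    (∀ v, ‖f v‖ = ‖v‖) ∧ Function.Injective f ∧
    Module.finrank ℂ (Submodule.span ℂ (Set.range f)) = p ^ k :=
  graph_code_isometry_general p k n AXY AYY hrank q hq f hf
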